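/- arXiv:2303.06829 — 5 statements merged into one kernel-verified Lean document; each statement's English description precedes it below -/
import Mathlib

section
/- Let φ : ℕ → ℕ be injective with φ^m having no fixed point for every m ≥ 1. Then for every k ∈ ℕ and n ≥ 1, the φ bi-orbit of k decomposes as the disjoint union A_{1,k} = ⋃_{i=0}^{n-1} A_{n,φ^i(k)}, and the sets A_{n,φ^i(k)} for 0 ≤ i ≤ n−1 are pairwise disjoint. -/
/-- The `φ^n` bi-orbit of `k`: the set of points lying on the same
forward/backward `φ^n`-orbit as `k`. -/
def biOrbit (φ : ℕ → ℕ) (n k : ℕ) : Set ℕ :=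
  {m : ℕ | ∃ a b : ℕ, φ^[a * n] m = φ^[b * n] k}

/-!
Without periodic points, `p ↦ φ^[p] k` is injective. Every point of the `φ`-bi-orbit of `k` is
pushed by some `φ^[a n]` to a point `φ^[q n + r] k` with `r < n`, which places it in the
`φ^n`-bi-orbit of `φ^[r] k`. Two `φ^n`-bi-orbits of `φ^[i] k` and `φ^[j] k` that meet force
`φ^[p n + i] k = φ^[q n + j] k`, hence `p n + i = q n + j` and `i ≡ j (mod n)`.
-/

open Function

theorem Function.iterate_left_injective_of_forall_iterate_ne {α : Type*} {f : α → α}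
    (hf : ∀ m : ℕ, 1 ≤ m → ∀ x : α, f^[m] x ≠ x) (x : α) : Injective (f^[·] x) :=
  .of_lt_imp_ne fun p q hpq h =>
    hf (q - p) (by omega) (f^[p] x) (by rw [← iterate_add_apply, Nat.sub_add_cancel hpq.le, h])

section biOrbit

variable {φ : ℕ → ℕ} {n : ℕ}

theorem mem_biOrbit_iterate_iff {m k i : ℕ} :
    m ∈ biOrbit φ n (φ^[i] k) ↔ ∃ a b : ℕ, φ^[a * n] m = φ^[b * n + i] k := by
  simp only [biOrbit, Set.mem_ofPred_eq, iterate_add_apply]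

theorem mem_biOrbit_of_mem_of_mem {m x y : ℕ} (hx : m ∈ biOrbit φ n x)
    (hy : m ∈ biOrbit φ n y) :
    y ∈ biOrbit φ n x := by
  obtain ⟨a, b, hab⟩ := hx
  obtain ⟨c, d, hcd⟩ := hy
  refine ⟨a + d, c + b, ?_⟩
  calc φ^[(a + d) * n] y = φ^[a * n] (φ^[d * n] y) := by rw [add_mul, iterate_add_apply]
    _ = φ^[c * n] (φ^[a * n] m) := by
      rw [← hcd, ← iterate_add_apply, ← iterate_add_apply, add_comm]
    _ = φ^[(c + b) * n] x := by rw [hab, add_mul, iterate_add_apply]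

theorem biOrbit_one_eq_iUnion (k : ℕ) (hn : 1 ≤ n) :
    biOrbit φ 1 k = ⋃ i ∈ Finset.range n, biOrbit φ n (φ^[i] k) := by
  ext m
  simp only [Set.mem_iUnion, Finset.mem_range, mem_biOrbit_iterate_iff]
  constructor
  · rintro ⟨a, b, h⟩
    simp only [mul_one] at h
    set e := b + a * (n - 1)
    refine ⟨e % n, Nat.mod_lt _ hn, a, e / n, ?_⟩
    calc φ^[a * n] m = φ^[a * (n - 1)] (φ^[a] m) := by
          rw [← iterate_add_apply, ← mul_add_one, Nat.sub_add_cancel hn]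
      _ = φ^[e / n * n + e % n] k := by
          rw [h, ← iterate_add_apply, Nat.div_add_mod', add_comm]
  · rintro ⟨i, -, a, b, h⟩
    exact ⟨a * n, b * n + i, by simpa only [mul_one] using h⟩

theorem disjoint_biOrbit_iterate (hfix : ∀ m : ℕ, 1 ≤ m → ∀ k : ℕ, φ^[m] k ≠ k)
    (k : ℕ) {i j : ℕ} (hi : i < n) (hj : j < n) (hij : i ≠ j) :
    Disjoint (biOrbit φ n (φ^[i] k)) (biOrbit φ n (φ^[j] k)) := by
  refine Set.disjoint_left.mpr fun m hmi hmj => hij ?_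
  obtain ⟨p, q, hpq⟩ := mem_biOrbit_iterate_iff.mp (mem_biOrbit_of_mem_of_mem hmj hmi)
  have hexp : p * n + i = q * n + j := by
    rw [← iterate_add_apply] at hpq
    exact iterate_left_injective_of_forall_iterate_ne hfix k hpq
  have hmod := congrArg (· % n) hexp
  simpa only [add_comm _ i, add_comm _ j, Nat.add_mul_mod_self_right, Nat.mod_eq_of_lt hi,
    Nat.mod_eq_of_lt hj] using hmod

end biOrbit

theorem biOrbit_decomposition_general (φ : ℕ → ℕ)
    (hfix : ∀ m : ℕ, 1 ≤ m → ∀ k : ℕ, φ^[m] k ≠ k) (k n : ℕ) (hn : 1 ≤ n) :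
    (biOrbit φ 1 k = ⋃ i ∈ Finset.range n, biOrbit φ n (φ^[i] k)) ∧
    (∀ i : ℕ, i < n → ∀ j : ℕ, j < n → i ≠ j →
      biOrbit φ n (φ^[i] k) ∩ biOrbit φ n (φ^[j] k) = ∅) :=
  ⟨biOrbit_one_eq_iUnion k hn, fun _ hi _ hj hij =>
    Set.disjoint_iff_inter_eq_empty.mp (disjoint_biOrbit_iterate hfix k hi hj hij)⟩

theorem biOrbit_decomposition (φ : ℕ → ℕ) (hinj : Function.Injective φ)
    (hfix : ∀ m : ℕ, 1 ≤ m → ∀ k : ℕ, φ^[m] k ≠ k) (k n : ℕ) (hn : 1 ≤ n) :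
    (biOrbit φ 1 k = ⋃ i ∈ Finset.range n, biOrbit φ n (φ^[i] k)) ∧
    (∀ i : ℕ, i < n → ∀ j : ℕ, j < n → i ≠ j →
      biOrbit φ n (φ^[i] k) ∩ biOrbit φ n (φ^[j] k) = ∅) :=
  biOrbit_decomposition_general φ hfix k n hn
end

section
/- Let φ : ℕ → ℕ be injective with φ^m having no fixed point for every m ≥ 1. Then for every finite set F ⊆ ℕ and every k ∈ ℕ there exists N ∈ ℕ such that for all n > N, B_{n,k} ∩ F = ∅, where B_{n,k} = {m ∈ ℕ : ∃ i ≥ 1, φ^{in}(k) = m or φ^{in}(m) = k} is the punctured φ^n bi-orbit of k. -/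
/-- The punctured `φ^n` bi-orbit of `k`. -/
def puncturedBiOrbit (φ : ℕ → ℕ) (n k : ℕ) : Set ℕ :=
  {m : ℕ | ∃ i : ℕ, 1 ≤ i ∧ (φ^[i * n] k = m ∨ φ^[i * n] m = k)}

/-!
Without periodic points, `j ↦ φ^[j] x` is injective for every `x`. Hence only finitely many times
`j` satisfy `φ^[j] k ∈ F`, and for each `m ∈ F` at most one time satisfies `φ^[j] m = k`. A point of
`B_{n,k} ∩ F` yields such a time `i * n ≥ n`, so none exists once `n` exceeds all of them.
-/

namespace Function

variable {α : Type*} {f : α → α}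

theorem injective_iterate_apply_of_forall_iterate_ne (hf : ∀ n, 1 ≤ n → ∀ y, f^[n] y ≠ y)
    (x : α) : Injective (f^[·] x) := by
  suffices h : ∀ a b, a ≤ b → f^[a] x = f^[b] x → a = b from
    fun a b hab => (le_total a b).elim (h a b · hab) (fun hba => (h b a hba hab.symm).symm)
  intro a b hab heq
  obtain ⟨c, rfl⟩ := Nat.exists_eq_add_of_le hab
  rcases Nat.eq_zero_or_pos c with rfl | hc
  · rfl
  · refine absurd ?_ (hf c hc (f^[a] x))
    rw [← iterate_add_apply, add_comm, ← heq]

theorem finite_setOf_iterate_apply_mem (hf : ∀ n, 1 ≤ n → ∀ y, f^[n] y ≠ y) {F : Set α}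
    (hF : F.Finite) (x : α) : {j | f^[j] x ∈ F}.Finite :=
  hF.preimage (injective_iterate_apply_of_forall_iterate_ne hf x).injOn

theorem finite_setOf_exists_iterate_apply_eq (hf : ∀ n, 1 ≤ n → ∀ y, f^[n] y ≠ y) {F : Set α}
    (hF : F.Finite) (x : α) : {j | ∃ m ∈ F, f^[j] m = x}.Finite := by
  refine (hF.biUnion fun m _ => Set.Subsingleton.finite (s := {j | f^[j] m = x}) ?_).subset ?_
  · exact fun a ha b hb => injective_iterate_apply_of_forall_iterate_ne hf m (ha.trans hb.symm)
  · rintro j ⟨m, hm, hj⟩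
    exact Set.mem_biUnion hm hj

end Function

theorem puncturedBiOrbit_inter_eq_empty_of_bound {φ : ℕ → ℕ} {F : Set ℕ} {k N : ℕ}
    (hN : ∀ j, (φ^[j] k ∈ F ∨ ∃ m ∈ F, φ^[j] m = k) → j ≤ N) {n : ℕ} (hn : N < n) :
    puncturedBiOrbit φ n k ∩ F = ∅ := by
  refine Set.eq_empty_of_forall_notMem fun m ⟨⟨i, hi, hm⟩, hmF⟩ => ?_
  have hle : i * n ≤ N := by
    refine hN _ ?_
    rcases hm with rfl | hm
    exacts [Or.inl hmF, Or.inr ⟨m, hmF, hm⟩]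
  have : n ≤ i * n := Nat.le_mul_of_pos_left n hi
  omega

theorem puncturedBiOrbit_escapes_finite_sets_general (φ : ℕ → ℕ)
    (hfix : ∀ m : ℕ, 1 ≤ m → ∀ k : ℕ, φ^[m] k ≠ k) :
    ∀ F : Set ℕ, F.Finite → ∀ k : ℕ, ∃ N : ℕ, ∀ n : ℕ, N < n →
      puncturedBiOrbit φ n k ∩ F = ∅ := by
  intro F hF k
  obtain ⟨N, hN⟩ := ((Function.finite_setOf_iterate_apply_mem hfix hF k).union
    (Function.finite_setOf_exists_iterate_apply_eq hfix hF k)).bddAbove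
  exact ⟨N, fun n => puncturedBiOrbit_inter_eq_empty_of_bound fun j hj => hN hj⟩

theorem puncturedBiOrbit_escapes_finite_sets (φ : ℕ → ℕ) (hinj : Function.Injective φ)
    (hfix : ∀ m : ℕ, 1 ≤ m → ∀ k : ℕ, φ^[m] k ≠ k) :
    ∀ F : Set ℕ, F.Finite → ∀ k : ℕ, ∃ N : ℕ, ∀ n : ℕ, N < n →
      puncturedBiOrbit φ n k ∩ F = ∅ :=
  puncturedBiOrbit_escapes_finite_sets_general φ hfix
end

section
/- Let 1 ≤ p < ∞, let w : ℕ → ℂ, and let φ : ℕ → ℕ be injective with φ^n having no fixed point for every n ≥ 1. Then the set ⋂_{n≥1} D((wC_φ)^n) = {x ∈ ℓ^p(ℕ,ℂ) : for every n ≥ 1, the sequence k ↦ (∏_{i=0}^{n-1} w(φ^i(k)))·x(φ^n(k)) lies in ℓ^p(ℕ,ℂ)} is dense in ℓ^p(ℕ,ℂ). -/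
open scoped ENNReal

/-- The `n`-th iterate of the weighted pseudo-shift `wC_φ` applied to a sequence `x`:
`k ↦ (∏_{i=0}^{n-1} w(φ^i(k))) · x(φ^n(k))`. -/
def pseudoShiftIter (w : ℕ → ℂ) (φ : ℕ → ℕ) (n : ℕ) (x : ℕ → ℂ) : ℕ → ℂ :=
  fun k => (∏ i ∈ Finset.range n, w (φ^[i] k)) * x (φ^[n] k)

theorem Memℓp.of_finite_dsupport {α : Type*} {E : α → Type*} [∀ i, NormedAddCommGroup (E i)]
    {p : ℝ≥0∞} {f : ∀ i, E i} (hf : {i | f i ≠ 0}.Finite) : Memℓp f p :=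
  (memℓp_zero hf).of_exponent_ge zero_le

theorem lp.dense_finite_dsupport {α : Type*} {E : α → Type*} [∀ i, NormedAddCommGroup (E i)]
    {p : ℝ≥0∞} [Fact (1 ≤ p)] (hp : p ≠ ⊤) : Dense {f : lp E p | {i | f i ≠ 0}.Finite} := by
  classical
  refine fun f ↦ mem_closure_of_tendsto (lp.hasSum_single hp f) (.of_forall fun s ↦ ?_)
  refine s.finite_toSet.subset fun i hi ↦ ?_
  simp only [Set.mem_ofPred_eq, lp.coeFn_sum, Finset.sum_apply, lp.coeFn_single,
    Finset.sum_pi_single] at hi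
  exact of_not_not fun his ↦ hi (if_neg his)

theorem support_pseudoShiftIter_subset (w : ℕ → ℂ) (φ : ℕ → ℕ) (n : ℕ) (x : ℕ → ℂ) :
    Function.support (pseudoShiftIter w φ n x) ⊆ φ^[n] ⁻¹' Function.support x :=
  fun _ hk hx ↦ hk (by simp [pseudoShiftIter, hx])

theorem finite_support_pseudoShiftIter (w : ℕ → ℂ) {φ : ℕ → ℕ} (hφ : Function.Injective φ)
    (n : ℕ) {x : ℕ → ℂ} (hx : (Function.support x).Finite) :
    (Function.support (pseudoShiftIter w φ n x)).Finite :=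
  (hx.preimage (hφ.iterate n).injOn).subset (support_pseudoShiftIter_subset w φ n x)

theorem dense_inter_domains_pseudoShift_general (p : ℝ≥0∞) [Fact (1 ≤ p)] (hp' : p ≠ ⊤)
    (w : ℕ → ℂ) (φ : ℕ → ℕ) (hinj : Function.Injective φ) :
    Dense {x : lp (fun _ : ℕ => ℂ) p |
      ∀ n : ℕ, 1 ≤ n → Memℓp (pseudoShiftIter w φ n ⇑x) p} :=
  (lp.dense_finite_dsupport hp').mono fun _ hx n _ ↦
    Memℓp.of_finite_dsupport (finite_support_pseudoShiftIter w hinj n hx)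

theorem dense_inter_domains_pseudoShift (p : ℝ≥0∞) [Fact (1 ≤ p)] (hp' : p ≠ ⊤)
    (w : ℕ → ℂ) (φ : ℕ → ℕ) (hinj : Function.Injective φ)
    (hfix : ∀ n : ℕ, 1 ≤ n → ∀ k : ℕ, φ^[n] k ≠ k) :
    Dense {x : lp (fun _ : ℕ => ℂ) p |
      ∀ n : ℕ, 1 ≤ n → Memℓp (pseudoShiftIter w φ n ⇑x) p} :=
  dense_inter_domains_pseudoShift_general p hp' w φ hinj
end

section
/- Let 1 ≤ p < ∞, let w : ℕ → ℂ satisfy w(n) ≠ 0 for all n ∈ ℕ, and let φ : ℕ → ℕ. If the weighted pseudo-shift wC_φ is hypercyclic on ℓ^p(ℕ,ℂ), then φ is injective. -/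
open scoped ENNReal

/-- The weighted pseudo-shift `wC_φ` is hypercyclic on `ℓ^p(ℕ, ℂ)`: there is a vector `x`
lying in the domain of every iterate `(wC_φ)^n` (`n ≥ 1`) whose orbit
`{(wC_φ)^n x : n ≥ 0}` is dense in `ℓ^p(ℕ, ℂ)`. -/
def lpHypercyclic (p : ℝ≥0∞) [Fact (1 ≤ p)] (w : ℕ → ℂ) (φ : ℕ → ℕ) : Prop :=
  ∃ x : lp (fun _ : ℕ => ℂ) p,
    (∀ n : ℕ, 1 ≤ n → Memℓp (pseudoShiftIter w φ n ⇑x) p) ∧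
    Dense {y : lp (fun _ : ℕ => ℂ) p | ∃ n : ℕ, ⇑y = pseudoShiftIter w φ n ⇑x}

/-!
If `φ a = φ b` with `a ≠ b`, then every iterate `(wC_φ)^n x` with `n ≥ 1` satisfies the linear
relation `w b · y a = w a · y b`, which cuts out a proper closed subspace of `ℓ^p`. A dense orbit
minus its starting point is still dense, so it cannot lie in that subspace.
-/

open Filter Topology

theorem Set.eq_univ_of_dense_subset_insert {X : Type*} [TopologicalSpace X] [T1Space X]
    [∀ x : X, NeBot (𝓝[≠] x)] {s C : Set X} (hs : Dense s) (hC : IsClosed C) (x : X)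
    (hsC : s ⊆ insert x C) : C = univ :=
  eq_univ_of_univ_subset <| (hs.sdiff_singleton x).closure_eq ▸
    closure_minimal (fun _ hy => (hsC hy.1).resolve_left hy.2) hC

/-- With `Real.punctured_nhds_module_neBot`, this shows that `ℓ^p` has no isolated points. -/
instance lp.nontrivial {α : Type*} [Nonempty α] {E : α → Type*}
    [∀ i, NormedAddCommGroup (E i)] [∀ i, Nontrivial (E i)] (p : ℝ≥0∞) : Nontrivial (lp E p) := by
  classical
  obtain ⟨i⟩ := ‹Nonempty α›
  obtain ⟨a, ha⟩ := exists_ne (0 : E i)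
  exact ⟨⟨lp.single p i a, 0, fun h => ha (by simpa using congrArg (· i) h)⟩⟩

theorem pseudoShiftIter_zero (w : ℕ → ℂ) (φ : ℕ → ℕ) (x : ℕ → ℂ) :
    pseudoShiftIter w φ 0 x = x := by
  ext k
  simp [pseudoShiftIter]

theorem pseudoShiftIter_succ_apply (w : ℕ → ℂ) (φ : ℕ → ℕ) (n : ℕ) (x : ℕ → ℂ) (k : ℕ) :
    pseudoShiftIter w φ (n + 1) x k = w k * pseudoShiftIter w φ n x (φ k) := by
  simp only [pseudoShiftIter, Finset.prod_range_succ', Function.iterate_succ_apply,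
    Function.iterate_zero_apply]
  ring

theorem pseudoShiftIter_succ_mul_comm {w : ℕ → ℂ} {φ : ℕ → ℕ} {a b : ℕ} (hab : φ a = φ b)
    (n : ℕ) (x : ℕ → ℂ) :
    w b * pseudoShiftIter w φ (n + 1) x a = w a * pseudoShiftIter w φ (n + 1) x b := by
  rw [pseudoShiftIter_succ_apply, pseudoShiftIter_succ_apply, hab]
  ring

theorem injective_of_lpHypercyclic_general (p : ℝ≥0∞) [Fact (1 ≤ p)]
    (w : ℕ → ℂ) (hw : ∀ n : ℕ, w n ≠ 0) (φ : ℕ → ℕ)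
    (h : lpHypercyclic p w φ) : Function.Injective φ := by
  intro a b hab
  by_contra hne
  obtain ⟨x, -, hdense⟩ := h
  have heval (i : ℕ) : Continuous fun y : lp (fun _ : ℕ => ℂ) p => y i :=
    (lp.lipschitzWith_one_eval p i).continuous
  have hrel : {y : lp (fun _ : ℕ => ℂ) p | w b * y a = w a * y b} = Set.univ := by
    refine Set.eq_univ_of_dense_subset_insert hdense
      (isClosed_eq ((heval a).const_mul _) ((heval b).const_mul _)) x ?_
    rintro y ⟨_ | n, hy⟩
    · exact .inl (lp.ext (hy.trans (pseudoShiftIter_zero w φ x)))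
    · exact .inr (show w b * y a = w a * y b by rw [hy]; exact pseudoShiftIter_succ_mul_comm hab n x)
  have := hrel ▸ Set.mem_univ (lp.single p a (1 : ℂ))
  simp [Ne.symm hne, hw b] at this

theorem injective_of_lpHypercyclic (p : ℝ≥0∞) [Fact (1 ≤ p)] (hp' : p ≠ ⊤)
    (w : ℕ → ℂ) (hw : ∀ n : ℕ, w n ≠ 0) (φ : ℕ → ℕ)
    (h : lpHypercyclic p w φ) : Function.Injective φ :=
  injective_of_lpHypercyclic_general p w hw φ h
end

section
/- Let 1 ≤ p < ∞, let w : ℕ → ℂ, and let φ : ℕ → ℕ. If the weighted pseudo-shift wC_φ is hypercyclic on ℓ^p(ℕ,ℂ), then for every n ≥ 1 the iterate φ^n has no fixed point: φ^n(l) ≠ l for all l ∈ ℕ. -/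
open scoped ENNReal

/-!
If `φ^[n] l = l`, then along the orbit of any `x` the `l`-th coordinates satisfy
`c (m + n) = W * c m` with `W = ∏_{i<n} w (φ^[i] l)`. Such a sequence has norms either bounded
(if `‖W‖ ≤ 1`) or bounded away from `0` off its zeros (if `‖W‖ > 1`), so it is not dense in `ℂ`.
But evaluation at `l` maps a dense orbit in `ℓ^p` onto a dense subset of `ℂ`.
-/

open scoped Topology
open Filter Finset

theorem Nat.forall_of_forall_lt_of_add {n : ℕ} (hn : 0 < n) {P : ℕ → Prop}
    (hlt : ∀ m < n, P m) (hadd : ∀ m, P m → P (m + n)) (m : ℕ) : P m := by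
  induction m using Nat.strong_induction_on with
  | _ m ih =>
    rcases lt_or_ge m n with hm | hm
    · exact hlt m hm
    · obtain ⟨k, rfl⟩ := Nat.exists_eq_add_of_le' hm
      exact hadd k (ih k (by omega))

theorem Finset.exists_pos_forall_le_norm_of_ne_zero {ι E : Type*} [NormedAddCommGroup E]
    (s : Finset ι) (c : ι → E) : ∃ ε > 0, ∀ i ∈ s, c i ≠ 0 → ε ≤ ‖c i‖ := by
  have hsmall : ∀ᶠ ε in 𝓝[>] (0 : ℝ), ∀ i ∈ s, c i ≠ 0 → ε ≤ ‖c i‖ := by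
    refine (eventually_all_finset s).2 fun i _ => ?_
    by_cases hi : c i = 0
    · exact Eventually.of_forall fun _ h => absurd hi h
    · exact ((eventually_le_nhds (norm_pos_iff.2 hi)).filter_mono nhdsWithin_le_nhds).mono
        fun _ h _ => h
  obtain ⟨ε, hε, hεpos⟩ := (hsmall.and self_mem_nhdsWithin).exists
  exact ⟨ε, hεpos, hε⟩

section NormRecurrence

variable {E : Type*} [NormedAddCommGroup E] [NormedSpace ℝ E] [Nontrivial E]
  {c : ℕ → E} {n : ℕ} {a : ℝ}

theorem not_denseRange_of_norm_add_eq_of_le_one (hn : 0 < n)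
    (hc : ∀ m, ‖c (m + n)‖ = a * ‖c m‖) (ha : a ≤ 1) : ¬ DenseRange c := by
  intro hdense
  set B := ∑ r ∈ range n, ‖c r‖
  have hbound : ∀ m, ‖c m‖ ≤ B := by
    refine Nat.forall_of_forall_lt_of_add hn (fun r hr => ?_) (fun m hm => ?_)
    · exact single_le_sum (f := fun r => ‖c r‖) (fun _ _ => norm_nonneg _) (mem_range.2 hr)
    · rw [hc]
      exact (mul_le_of_le_one_left (norm_nonneg _) ha).trans hm
  obtain ⟨z, hz⟩ := exists_norm_eq E (c := B + 1) (by positivity)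
  obtain ⟨m, hm⟩ := hdense.exists_mem_open (isOpen_lt continuous_const continuous_norm)
    (⟨z, show B < ‖z‖ by linarith⟩ : {y : E | B < ‖y‖}.Nonempty)
  exact (hbound m).not_gt hm

theorem not_denseRange_of_norm_add_eq_of_one_lt (hn : 0 < n)
    (hc : ∀ m, ‖c (m + n)‖ = a * ‖c m‖) (ha : 1 < a) : ¬ DenseRange c := by
  intro hdense
  obtain ⟨ε, hεpos, hε⟩ := Finset.exists_pos_forall_le_norm_of_ne_zero (range n) c
  have hgap : ∀ m, c m = 0 ∨ ε ≤ ‖c m‖ := by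
    refine Nat.forall_of_forall_lt_of_add hn (fun r hr => ?_) (fun m hm => ?_)
    · exact or_iff_not_imp_left.2 (hε r (mem_range.2 hr))
    · rcases hm with hm | hm
      · left
        rw [← norm_eq_zero, hc, hm, norm_zero, mul_zero]
      · right
        rw [hc]
        exact hm.trans (le_mul_of_one_le_left (norm_nonneg _) ha.le)
  obtain ⟨z, hz⟩ := exists_norm_eq E (c := ε / 2) (by linarith)
  obtain ⟨m, hm₀, hmε⟩ := hdense.exists_mem_open
    ((isOpen_lt continuous_const continuous_norm).inter (isOpen_lt continuous_norm continuous_const))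
    (⟨z, show 0 < ‖z‖ by linarith, show ‖z‖ < ε by linarith⟩ :
      ({y : E | 0 < ‖y‖} ∩ {y | ‖y‖ < ε}).Nonempty)
  rcases hgap m with h | h
  · exact (norm_pos_iff.1 hm₀) h
  · exact (lt_irrefl _) (h.trans_lt hmε)

theorem not_denseRange_of_norm_add_eq (hn : 0 < n) (hc : ∀ m, ‖c (m + n)‖ = a * ‖c m‖) :
    ¬ DenseRange c := by
  rcases le_or_gt a 1 with ha | ha
  · exact not_denseRange_of_norm_add_eq_of_le_one hn hc ha
  · exact not_denseRange_of_norm_add_eq_of_one_lt hn hc ha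

end NormRecurrence

theorem lp.dense_image_eval {α : Type*} {E : α → Type*} [∀ i, NormedAddCommGroup (E i)]
    {p : ℝ≥0∞} [Fact (1 ≤ p)] {S : Set (lp E p)} (hS : Dense S) (i : α) :
    Dense ((fun f : lp E p => f i) '' S) := by
  classical
  have hsurj : Function.Surjective (fun f : lp E p => f i) :=
    fun a => ⟨lp.single p i a, lp.single_apply_self p i a⟩
  exact hsurj.denseRange.dense_image (lp.lipschitzWith_one_eval p i).continuous hS

theorem pseudoShiftIter_add_apply (w : ℕ → ℂ) (φ : ℕ → ℕ) (n m : ℕ) (x : ℕ → ℂ) (k : ℕ) :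
    pseudoShiftIter w φ (n + m) x k =
      (∏ i ∈ range n, w (φ^[i] k)) * pseudoShiftIter w φ m x (φ^[n] k) := by
  have hiter : ∀ j, φ^[n + j] k = φ^[j] (φ^[n] k) := fun j => by
    rw [add_comm, Function.iterate_add_apply]
  simp only [pseudoShiftIter, prod_range_add, hiter, mul_assoc]

theorem no_fixed_point_of_lpHypercyclic_general (p : ℝ≥0∞) [Fact (1 ≤ p)]
    (w : ℕ → ℂ) (φ : ℕ → ℕ) (h : lpHypercyclic p w φ) :
    ∀ n : ℕ, 1 ≤ n → ∀ l : ℕ, φ^[n] l ≠ l := by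
  intro n hn l hfix
  obtain ⟨x, -, hdense⟩ := h
  set c : ℕ → ℂ := fun m => pseudoShiftIter w φ m x l
  have hc : ∀ m, ‖c (m + n)‖ = ‖∏ i ∈ range n, w (φ^[i] l)‖ * ‖c m‖ := fun m => by
    simp only [c, add_comm m, pseudoShiftIter_add_apply, hfix, norm_mul]
  refine not_denseRange_of_norm_add_eq hn hc ((lp.dense_image_eval hdense l).mono ?_)
  rintro _ ⟨y, ⟨m, hm⟩, rfl⟩
  exact ⟨m, congrFun hm.symm l⟩

theorem no_fixed_point_of_lpHypercyclic (p : ℝ≥0∞) [Fact (1 ≤ p)] (hp' : p ≠ ⊤)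
    (w : ℕ → ℂ) (φ : ℕ → ℕ) (h : lpHypercyclic p w φ) :
    ∀ n : ℕ, 1 ≤ n → ∀ l : ℕ, φ^[n] l ≠ l :=
  no_fixed_point_of_lpHypercyclic_general p w φ h
end
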